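/- In the confounder SCM B := U_B, A := a·B + ā·U_A, C := c·B + c̄·U_C with ā = √(1−a²), c̄ = √(1−c²), and independent standard Gaussian noise, the minimal mean-squared residual of B after linear regression on (A, C) equals ā²c̄² / (ā² + c̄² − ā²c̄²). -/

import Mathlib

/-!
Writing `B − αA − γC = (1 − αa − γc)·U_B − α·ā·U_A − γ·c̄·U_C` as a combination of independent
standard Gaussians, its second moment is the quadratic `(1 − αa − γc)² + α²ā² + γ²c̄²`, and
completing the square shows that the least value of this quadratic is `ā²c̄² / (ā²c̄² + a²c̄² + c²ā²)`,
whose denominator is `ā² + c̄² − ā²c̄²` because `a² + ā² = 1`.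
-/

open MeasureTheory ProbabilityTheory

section LinearCombination

variable {Ω ι : Type*} [MeasurableSpace Ω] {P : Measure Ω} [IsFiniteMeasure P] [Fintype ι]

lemma integral_sq_sum_eq_sum_sq_mul_variance {X : ι → Ω → ℝ}
    (hX : ∀ i, MemLp (X i) 2 P) (hmean : ∀ i, P[X i] = 0)
    (hindep : Pairwise fun i j => X i ⟂ᵢ[P] X j) (p : ι → ℝ) :
    ∫ ω, (∑ i, p i * X i ω) ^ 2 ∂P = ∑ i, p i ^ 2 * Var[X i; P] := by
  set Y : ι → Ω → ℝ := fun i ω => p i * X i ω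
  have hY : ∀ i, MemLp (Y i) 2 P := fun i => (hX i).const_mul (p i)
  have hsum : ∀ ω, (∑ i, Y i) ω = ∑ i, p i * X i ω := fun ω => Finset.sum_apply ω _ _
  have hmean_sum : P[∑ i, Y i] = 0 := by
    simp only [hsum]
    rw [integral_finsetSum _ fun i _ => (hY i).integrable one_le_two]
    simp [Y, integral_const_mul, hmean]
  calc ∫ ω, (∑ i, p i * X i ω) ^ 2 ∂P
      = Var[∑ i, Y i; P] := by
        simp only [variance_of_integral_eq_zero (memLp_finsetSum' _ fun i _ => hY i).aemeasurable
          hmean_sum, hsum]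
    _ = ∑ i, Var[Y i; P] := IndepFun.variance_sum (fun i _ => hY i)
        fun i _ j _ hij => (hindep hij).comp (measurable_const_mul _) (measurable_const_mul _)
    _ = ∑ i, p i ^ 2 * Var[X i; P] := by simp only [Y, variance_const_mul]

lemma integral_sq_sum_eq_sum_sq_of_hasLaw_gaussianReal {X : ι → Ω → ℝ}
    (hX : ∀ i, HasLaw (X i) (gaussianReal 0 1) P)
    (hindep : Pairwise fun i j => X i ⟂ᵢ[P] X j) (p : ι → ℝ) :
    ∫ ω, (∑ i, p i * X i ω) ^ 2 ∂P = ∑ i, p i ^ 2 := by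
  have hmemLp : ∀ i, MemLp (X i) 2 P := fun i =>
    (memLp_map_measure_iff aestronglyMeasurable_id (hX i).aemeasurable).1
      ((hX i).map_eq ▸ memLp_id_gaussianReal 2)
  rw [integral_sq_sum_eq_sum_sq_mul_variance hmemLp (fun i => by simp [(hX i).integral_eq])
    hindep p]
  simp [fun i => (hX i).variance_eq]

end LinearCombination

lemma isLeast_residual_quadratic {a c A C : ℝ} (hA : 0 < A) (hC : 0 < C) :
    IsLeast {e : ℝ | ∃ α γ : ℝ, e = (1 - α * a - γ * c) ^ 2 + α ^ 2 * A + γ ^ 2 * C}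
      (A * C / (A * C + a ^ 2 * C + c ^ 2 * A)) := by
  set D := A * C + a ^ 2 * C + c ^ 2 * A with hD
  have hDpos : 0 < D := by positivity
  constructor
  · refine ⟨a * C / D, c * A / D, ?_⟩
    field_simp
    ring
  · rintro e ⟨α, γ, rfl⟩
    have hsos : ((1 - α * a - γ * c) ^ 2 + α ^ 2 * A + γ ^ 2 * C) * D - A * C
        = ((a * (D * α - a * C) + c * (D * γ - c * A)) ^ 2
          + A * (D * α - a * C) ^ 2 + C * (D * γ - c * A) ^ 2) / D := by
      rw [hD]; field_simp; ring
    rw [div_le_iff₀ hDpos, ← sub_nonneg, hsos]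
    positivity

/-- In the confounder SCM `B := U_B`, `A := a·B + ā·U_A`, `C := c·B + c̄·U_C` with
`ā = √(1−a²)`, `c̄ = √(1−c²)` and independent standard Gaussian noise, the minimal
mean-squared residual of `B` after linear regression on `(A, C)` equals
`ā²c̄² / (ā² + c̄² − ā²c̄²)`. -/
theorem confounder_regression_residual
    {Ω : Type*} [MeasurableSpace Ω] (μ : Measure Ω) [IsProbabilityMeasure μ]
    (a c : ℝ) (ha : |a| < 1) (hc : |c| < 1)
    (abar cbar : ℝ) (habar : abar = Real.sqrt (1 - a ^ 2))
    (hcbar : cbar = Real.sqrt (1 - c ^ 2))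
    (UA UB UC A B C : Ω → ℝ)
    (hmeas : ∀ i, Measurable (![UA, UB, UC] i))
    (hindep : iIndepFun ![UA, UB, UC] μ)
    (hgauss : ∀ i, Measure.map (![UA, UB, UC] i) μ = gaussianReal 0 1)
    (hBdef : B = UB)
    (hAdef : A = fun ω => a * B ω + abar * UA ω)
    (hCdef : C = fun ω => c * B ω + cbar * UC ω) :
    IsLeast {e : ℝ | ∃ α γ : ℝ, e = ∫ ω, (B ω - α * A ω - γ * C ω) ^ 2 ∂μ}
      (abar ^ 2 * cbar ^ 2 / (abar ^ 2 + cbar ^ 2 - abar ^ 2 * cbar ^ 2)) := by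
  have hlaw : ∀ i, HasLaw (![UA, UB, UC] i) (gaussianReal 0 1) μ :=
    fun i => ⟨(hmeas i).aemeasurable, hgauss i⟩
  have hresidual : ∀ α γ : ℝ, ∫ ω, (B ω - α * A ω - γ * C ω) ^ 2 ∂μ
      = (1 - α * a - γ * c) ^ 2 + α ^ 2 * abar ^ 2 + γ ^ 2 * cbar ^ 2 := by
    intro α γ
    have h := integral_sq_sum_eq_sum_sq_of_hasLaw_gaussianReal hlaw
      (fun _ _ hij => hindep.indepFun hij) ![-(α * abar), 1 - α * a - γ * c, -(γ * cbar)]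
    simp only [Fin.sum_univ_three, Matrix.cons_val_zero, Matrix.cons_val_one,
      Matrix.cons_val_two, Matrix.tail_cons, Matrix.head_cons] at h
    subst hBdef hAdef hCdef
    convert h using 1
    · congr 1 with ω
      ring
    · ring
  have ha_sq : 0 < 1 - a ^ 2 := sub_pos.2 ((sq_lt_one_iff_abs_lt_one a).2 ha)
  have hc_sq : 0 < 1 - c ^ 2 := sub_pos.2 ((sq_lt_one_iff_abs_lt_one c).2 hc)
  have habar_sq : abar ^ 2 = 1 - a ^ 2 := by rw [habar, Real.sq_sqrt ha_sq.le]
  have hcbar_sq : cbar ^ 2 = 1 - c ^ 2 := by rw [hcbar, Real.sq_sqrt hc_sq.le]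
  have hden : abar ^ 2 + cbar ^ 2 - abar ^ 2 * cbar ^ 2
      = abar ^ 2 * cbar ^ 2 + a ^ 2 * cbar ^ 2 + c ^ 2 * abar ^ 2 := by
    rw [habar_sq, hcbar_sq]; ring
  simp only [hresidual, hden]
  exact isLeast_residual_quadratic (habar_sq ▸ ha_sq) (hcbar_sq ▸ hc_sq)
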